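/- obsN-diamond for the full unbiased evaluation in the probabilistic Call-by-Value λ-calculus: (a) if m ⇉E m₁ and m ⇉E m₂, then either m₁ = m₂ or there exists n with m₁ ⇉E n and m₂ ⇉E n; (b) if m ⇉E m₁ and m ⇉E m₂ then obsN(m₁) = obsN(m₂). -/
import Mathlib


/-- Terms of the probabilistic Call-by-Value λ-calculus `Λ⊕`, in de Bruijn
representation: `M ::= x | λx.M | M M | M ⊕ M`. -/
inductive PTm : Type
  | var : ℕ → PTm
  | lam : PTm → PTm
  | app : PTm → PTm → PTm
  | oplus : PTm → PTm → PTm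
deriving DecidableEq

namespace PTm

/-- Lift (shift by one) the free variables of index `≥ d`. -/
def lift (d : ℕ) : PTm → PTm
  | var n => if n < d then var n else var (n + 1)
  | lam M => lam (lift (d + 1) M)
  | app M N => app (lift d M) (lift d N)
  | oplus M N => oplus (lift d M) (lift d N)

/-- Capture-avoiding substitution `M[N/k]`. -/
def subst : PTm → ℕ → PTm → PTm
  | var n, k, N => if n = k then N else if k < n then var (n - 1) else var n
  | lam M, k, N => lam (subst M (k + 1) (lift 0 N))
  | app M₁ M₂, k, N => app (subst M₁ k N) (subst M₂ k N)
  | oplus M₁ M₂, k, N => oplus (subst M₁ k N) (subst M₂ k N)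

end PTm

/-- Values: variables and abstractions. -/
inductive IsValue : PTm → Prop
  | var (n : ℕ) : IsValue (PTm.var n)
  | lam (M : PTm) : IsValue (PTm.lam M)

/-- Full βv-reduction on terms: closure of `(λx.M)V ↦βv M[V/x]` (`V` a value) under
arbitrary contexts `C ::= ⟨⟩ | λx.C | C M | M C | C ⊕ M | M ⊕ C`. -/
inductive FullBv : PTm → PTm → Prop
  | beta {M V} : IsValue V → FullBv (PTm.app (PTm.lam M) V) (M.subst 0 V)
  | lam {M M'} : FullBv M M' → FullBv (PTm.lam M) (PTm.lam M')
  | appL {M M' N} : FullBv M M' → FullBv (PTm.app M N) (PTm.app M' N)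
  | appR {M N N'} : FullBv N N' → FullBv (PTm.app M N) (PTm.app M N')
  | oplusL {M M' N} : FullBv M M' → FullBv (PTm.oplus M N) (PTm.oplus M' N)
  | oplusR {M N N'} : FullBv N N' → FullBv (PTm.oplus M N) (PTm.oplus M N')

/-- Weak βv-reduction: closure of `↦βv` under weak contexts `W ::= ⟨⟩ | W M | M W`. -/
inductive WeakBv : PTm → PTm → Prop
  | beta {M V} : IsValue V → WeakBv (PTm.app (PTm.lam M) V) (M.subst 0 V)
  | appL {M M' N} : WeakBv M M' → WeakBv (PTm.app M N) (PTm.app M' N)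
  | appR {M N N'} : WeakBv N N' → WeakBv (PTm.app M N) (PTm.app M N')

/-- `OplusRed M M₁ M₂` : `M = W⟨P ⊕ Q⟩` for a weak context `W`, with branches
`M₁ = W⟨P⟩` and `M₂ = W⟨Q⟩`. -/
inductive OplusRed : PTm → PTm → PTm → Prop
  | root (M N : PTm) : OplusRed (PTm.oplus M N) M N
  | appL {P P₁ P₂ Q} : OplusRed P P₁ P₂ →
      OplusRed (PTm.app P Q) (PTm.app P₁ Q) (PTm.app P₂ Q)
  | appR {P Q Q₁ Q₂} : OplusRed Q Q₁ Q₂ →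
      OplusRed (PTm.app P Q) (PTm.app P Q₁) (PTm.app P Q₂)

/-- Multi-distributions: finite multisets of pairs `(p, M)`. -/
abbrev MDist := Multiset (NNReal × PTm)

/-- The multi-distribution `[1 M]`. -/
def single (M : PTm) : MDist := {((1 : NNReal), M)}

/-- A multi-distribution proper: all probabilities are in `(0,1]` and their sum is `≤ 1`. -/
def IsMDist (m : MDist) : Prop :=
  (∀ q ∈ m, 0 < q.1 ∧ q.1 ≤ 1) ∧ (m.map Prod.fst).sum ≤ 1

/-- One-step reduction `→ := →βv ∪ →⊕` from terms to multi-distributions: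
`C⟨(λx.M)V⟩ →βv [C⟨M[V/x]⟩]` and `W⟨M ⊕ N⟩ →⊕ [½ W⟨M⟩, ½ W⟨N⟩]`. -/
inductive Step : PTm → MDist → Prop
  | bv {M M'} : FullBv M M' → Step M (single M')
  | oplus {M M₁ M₂} : OplusRed M M₁ M₂ →
      Step M {((1 : NNReal) / 2, M₁), ((1 : NNReal) / 2, M₂)}

/-- Surface reduction `→s`: weak βv-steps together with all `→⊕`-steps. -/
inductive SStep : PTm → MDist → Prop
  | bv {M M'} : WeakBv M M' → SStep M (single M')
  | oplus {M M₁ M₂} : OplusRed M M₁ M₂ →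
      SStep M {((1 : NNReal) / 2, M₁), ((1 : NNReal) / 2, M₂)}

/-- A term is normal if it has no `→`-step. -/
def TmNormal (M : PTm) : Prop := ∀ m, ¬ Step M m

/-- A term is surface-normal if it has no `→s`-step. -/
def SurfNormal (M : PTm) : Prop := ∀ m, ¬ SStep M m

/-- The unbiased βv-strategy `⊳βv` on `Λ⊕`: weak βv-steps as long as there are any;
once the term has no weak βv-redex, iterate in the subterms. -/
inductive UnbBv : PTm → PTm → Prop
  | weak {M M'} : WeakBv M M' → UnbBv M M'
  | lam {P P'} : (∀ s, ¬ WeakBv (PTm.lam P) s) → UnbBv P P' →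
      UnbBv (PTm.lam P) (PTm.lam P')
  | appL {P P' Q} : (∀ s, ¬ WeakBv (PTm.app P Q) s) → UnbBv P P' →
      UnbBv (PTm.app P Q) (PTm.app P' Q)
  | appR {P Q Q'} : (∀ s, ¬ WeakBv (PTm.app P Q) s) → UnbBv Q Q' →
      UnbBv (PTm.app P Q) (PTm.app P Q')
  | oplusL {P P' Q} : (∀ s, ¬ WeakBv (PTm.oplus P Q) s) → UnbBv P P' →
      UnbBv (PTm.oplus P Q) (PTm.oplus P' Q)
  | oplusR {P Q Q'} : (∀ s, ¬ WeakBv (PTm.oplus P Q) s) → UnbBv Q Q' →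
      UnbBv (PTm.oplus P Q) (PTm.oplus P Q')

/-- Unbiased evaluation `⊳E` from terms to multi-distributions: a surface step if the
term is not surface-normal; otherwise an unbiased βv-step. -/
inductive EStep : PTm → MDist → Prop
  | surf {M m} : ¬ SurfNormal M → SStep M m → EStep M m
  | unb {M M'} : SurfNormal M → UnbBv M M' → EStep M (single M')

/-- Internal steps `⋫E`: `→`-steps that are not `⊳E`-steps. -/
def IStep (M : PTm) (m : MDist) : Prop := Step M m ∧ ¬ EStep M m

/-- Scalar multiplication `p • m` of a multi-distribution. -/
def scale (p : NNReal) (m : MDist) : MDist := m.map fun q => (p * q.1, q.2)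

/-- Lifting of a relation `r` from terms to multi-distributions, to a relation on
multi-distributions: `[M] ⇒r [M]`; `[M] ⇒r m` whenever `M r m`; and
`[pᵢ Mᵢ]ᵢ ⇒r Σᵢ pᵢ·mᵢ` whenever `[Mᵢ] ⇒r mᵢ` for each `i`. -/
inductive Lift (r : PTm → MDist → Prop) : MDist → MDist → Prop
  | zero : Lift r 0 0
  | keep {p M m n} : Lift r m n → Lift r ((p, M) ::ₘ m) ((p, M) ::ₘ n)
  | step {p M d m n} : r M d → Lift r m n → Lift r ((p, M) ::ₘ m) (scale p d + n)

/-- Full lifting of a relation `r` from terms to multi-distributions: as `Lift`, but a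
component may stay put only if it is a normal form. -/
inductive FullLift (r : PTm → MDist → Prop) : MDist → MDist → Prop
  | zero : FullLift r 0 0
  | keep {p M m n} : TmNormal M → FullLift r m n →
      FullLift r ((p, M) ::ₘ m) ((p, M) ::ₘ n)
  | step {p M d m n} : r M d → FullLift r m n →
      FullLift r ((p, M) ::ₘ m) (scale p d + n)

open Classical in
/-- The observation `obsN`: the subdistribution over normal forms carried by a
multi-distribution, `obsN(m)(N) = Σ { pᵢ : Mᵢ = N }` for `N` normal (and `0` on
non-normal terms). Subdistributions are ordered pointwise. -/
noncomputable def obsN (m : MDist) : PTm → NNReal := fun N =>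
  if TmNormal N then ((m.filter fun q => q.2 = N).map Prod.fst).sum else 0

section Aux

open PTm

/-! ### Basic impossibility lemmas -/

lemma not_weak_value {V s} (hv : IsValue V) (h : WeakBv V s) : False := by
  cases hv <;> cases h

lemma not_oplus_value {V a b} (hv : IsValue V) (h : OplusRed V a b) : False := by
  cases hv <;> cases h

lemma weak_full {M M'} (h : WeakBv M M') : FullBv M M' := by
  induction h with
  | beta hv => exact FullBv.beta hv
  | appL _ ih => exact FullBv.appL ih
  | appR _ ih => exact FullBv.appR ih

lemma unb_full {M M'} (h : UnbBv M M') : FullBv M M' := by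
  induction h with
  | weak w => exact weak_full w
  | lam _ _ ih => exact FullBv.lam ih
  | appL _ _ ih => exact FullBv.appL ih
  | appR _ _ ih => exact FullBv.appR ih
  | oplusL _ _ ih => exact FullBv.oplusL ih
  | oplusR _ _ ih => exact FullBv.oplusR ih

lemma sstep_step {M d} (h : SStep M d) : Step M d := by
  cases h with
  | bv w => exact Step.bv (weak_full w)
  | oplus o => exact Step.oplus o

lemma nn_weak {M M'} (w : WeakBv M M') : ¬ TmNormal M :=
  fun h => h _ (Step.bv (weak_full w))

lemma nn_unb {M M'} (w : UnbBv M M') : ¬ TmNormal M :=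
  fun h => h _ (Step.bv (unb_full w))

lemma nn_oplus {M A B} (o : OplusRed M A B) : ¬ TmNormal M :=
  fun h => h _ (Step.oplus o)

lemma estep_not_normal {M d} (h : EStep M d) : ¬ TmNormal M := by
  cases h with
  | surf _ s => exact fun hn => hn _ (sstep_step s)
  | unb _ u => exact nn_unb u

/-! ### Weak diamond -/

lemma weak_diamond {M A} (h1 : WeakBv M A) :
    ∀ B, WeakBv M B → A = B ∨ ∃ C, WeakBv A C ∧ WeakBv B C := by
  induction h1 with
  | @beta M V hv =>
    intro B h2
    cases h2 with
    | beta hv' => exact Or.inl rfl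
    | appL w => cases w
    | appR w => exact (not_weak_value hv w).elim
  | @appL P P' Q w ih =>
    intro B h2
    cases h2 with
    | beta hv' => cases w
    | appL w2 =>
      rcases ih _ w2 with rfl | ⟨C, hC1, hC2⟩
      · exact Or.inl rfl
      · exact Or.inr ⟨_, WeakBv.appL hC1, WeakBv.appL hC2⟩
    | appR w2 => exact Or.inr ⟨_, WeakBv.appR w2, WeakBv.appL w⟩
  | @appR P Q Q' w ih =>
    intro B h2
    cases h2 with
    | beta hv' => exact (not_weak_value hv' w).elim
    | appL w2 => exact Or.inr ⟨_, WeakBv.appL w2, WeakBv.appR w⟩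
    | appR w2 =>
      rcases ih _ w2 with rfl | ⟨C, hC1, hC2⟩
      · exact Or.inl rfl
      · exact Or.inr ⟨_, WeakBv.appR hC1, WeakBv.appR hC2⟩

/-! ### Weak vs oplus residuals -/

lemma weak_oplus {M M' M₁ M₂} (h : WeakBv M M') (o : OplusRed M M₁ M₂) :
    ∃ M₁' M₂', WeakBv M₁ M₁' ∧ WeakBv M₂ M₂' ∧ OplusRed M' M₁' M₂' := by
  induction h generalizing M₁ M₂ with
  | @beta B V hv =>
    cases o with
    | appL o' => cases o'
    | appR o' => exact (not_oplus_value hv o').elim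
  | @appL P P' Q w ih =>
    cases o with
    | appL o' =>
      obtain ⟨A, B, hA, hB, hO⟩ := ih o'
      exact ⟨_, _, WeakBv.appL hA, WeakBv.appL hB, OplusRed.appL hO⟩
    | appR o' =>
      exact ⟨_, _, WeakBv.appL w, WeakBv.appL w, OplusRed.appR o'⟩
  | @appR P Q Q' w ih =>
    cases o with
    | appL o' =>
      exact ⟨_, _, WeakBv.appR w, WeakBv.appR w, OplusRed.appL o'⟩
    | appR o' =>
      obtain ⟨A, B, hA, hB, hO⟩ := ih o'
      exact ⟨_, _, WeakBv.appR hA, WeakBv.appR hB, OplusRed.appR hO⟩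

/-! ### Oplus diamond -/

lemma oplus_diamond {M A B} (h1 : OplusRed M A B) :
    ∀ C D, OplusRed M C D → (A = C ∧ B = D) ∨
      ∃ A₁ A₂ B₁ B₂, OplusRed A A₁ A₂ ∧ OplusRed B B₁ B₂ ∧
        OplusRed C A₁ B₁ ∧ OplusRed D A₂ B₂ := by
  induction h1 with
  | root P Q =>
    intro C D h2
    cases h2 with
    | root => exact Or.inl ⟨rfl, rfl⟩
  | @appL P P₁ P₂ Q o ih =>
    intro C D h2
    cases h2 with
    | appL o2 =>
      rcases ih _ _ o2 with ⟨rfl, rfl⟩ | ⟨A₁, A₂, B₁, B₂, hA, hB, hC, hD⟩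
      · exact Or.inl ⟨rfl, rfl⟩
      · exact Or.inr ⟨_, _, _, _, OplusRed.appL hA, OplusRed.appL hB,
          OplusRed.appL hC, OplusRed.appL hD⟩
    | @appR _ _ Q₁ Q₂ o2 =>
      exact Or.inr ⟨_, _, _, _, OplusRed.appR o2, OplusRed.appR o2,
        OplusRed.appL o, OplusRed.appL o⟩
  | @appR P Q Q₁ Q₂ o ih =>
    intro C D h2
    cases h2 with
    | @appL _ P₁ P₂ _ o2 =>
      exact Or.inr ⟨_, _, _, _, OplusRed.appL o2, OplusRed.appL o2,
        OplusRed.appR o, OplusRed.appR o⟩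
    | appR o2 =>
      rcases ih _ _ o2 with ⟨rfl, rfl⟩ | ⟨A₁, A₂, B₁, B₂, hA, hB, hC, hD⟩
      · exact Or.inl ⟨rfl, rfl⟩
      · exact Or.inr ⟨_, _, _, _, OplusRed.appR hA, OplusRed.appR hB,
          OplusRed.appR hC, OplusRed.appR hD⟩

end Aux
section Aux2
open PTm

/-- Constructor index. -/
def ctorIdx : PTm → ℕ
  | PTm.var _ => 0
  | PTm.lam _ => 1
  | PTm.app _ _ => 2
  | PTm.oplus _ _ => 3

lemma unb_ctor {M M'} (h : UnbBv M M') (hw : ∀ s, ¬ WeakBv M s) :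
    ctorIdx M' = ctorIdx M := by
  cases h with
  | weak w => exact (hw _ w).elim
  | lam _ _ => rfl
  | appL _ _ => rfl
  | appR _ _ => rfl
  | oplusL _ _ => rfl
  | oplusR _ _ => rfl

lemma value_ctor {A B : PTm} (h : ctorIdx A = ctorIdx B) (hv : IsValue A) :
    IsValue B := by
  cases hv <;> cases B <;> simp [ctorIdx] at h <;> constructor

lemma lam_ctor {A B : PTm} (h : ctorIdx A = ctorIdx B) {P} (hA : A = PTm.lam P) :
    ∃ Q, B = PTm.lam Q := by
  subst hA; cases B <;> simp [ctorIdx] at h; exact ⟨_, rfl⟩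

lemma unb_noweak {M M'} (h : UnbBv M M') :
    (∀ s, ¬ WeakBv M s) → ∀ s, ¬ WeakBv M' s := by
  induction h with
  | weak w => intro hw; exact (hw _ w).elim
  | lam _ _ _ => intro _ s hs; cases hs
  | @appL P P' Q hcond hP ih =>
    intro _ s hs
    have hnP : ∀ s, ¬ WeakBv P s := fun s w => hcond _ (WeakBv.appL w)
    cases hs with
    | beta hv =>
      obtain ⟨L, rfl⟩ := lam_ctor (unb_ctor hP hnP) rfl
      exact hcond _ (WeakBv.beta hv)
    | appL w => exact ih hnP _ w
    | appR w => exact hcond _ (WeakBv.appR w)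
  | @appR P Q Q' hcond hQ ih =>
    intro _ s hs
    have hnQ : ∀ s, ¬ WeakBv Q s := fun s w => hcond _ (WeakBv.appR w)
    cases hs with
    | beta hv => exact hcond _ (WeakBv.beta (value_ctor (unb_ctor hQ hnQ) hv))
    | appL w => exact hcond _ (WeakBv.appL w)
    | appR w => exact ih hnQ _ w
  | oplusL _ _ _ => intro _ s hs; cases hs
  | oplusR _ _ _ => intro _ s hs; cases hs

/-! ### Surface-normal lemmas -/

lemma surf_lam {P} : SurfNormal (PTm.lam P) := by
  intro m h
  cases h with
  | bv w => cases w
  | oplus o => cases o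

lemma surf_noweak {M} (h : SurfNormal M) : ∀ s, ¬ WeakBv M s :=
  fun _ w => h _ (SStep.bv w)

lemma surf_nooplus {M} (h : SurfNormal M) : ∀ a b, ¬ OplusRed M a b :=
  fun _ _ o => h _ (SStep.oplus o)

lemma surf_app_left {P Q} (h : SurfNormal (PTm.app P Q)) : SurfNormal P := by
  intro m hs
  cases hs with
  | bv w => exact h _ (SStep.bv (WeakBv.appL w))
  | oplus o => exact h _ (SStep.oplus (OplusRed.appL o))

lemma surf_app_right {P Q} (h : SurfNormal (PTm.app P Q)) : SurfNormal Q := by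
  intro m hs
  cases hs with
  | bv w => exact h _ (SStep.bv (WeakBv.appR w))
  | oplus o => exact h _ (SStep.oplus (OplusRed.appR o))

lemma unb_surf {M M'} (h : UnbBv M M') : SurfNormal M → SurfNormal M' := by
  induction h with
  | weak w => intro hS; exact (surf_noweak hS _ w).elim
  | lam _ _ _ => intro _; exact surf_lam
  | @appL P P' Q hcond hP ih =>
    intro hS m hs
    have hP' : SurfNormal P' := ih (surf_app_left hS)
    cases hs with
    | bv w =>
      cases w with
      | beta hv =>
        obtain ⟨L, rfl⟩ := lam_ctor (unb_ctor hP (surf_noweak (surf_app_left hS))) rfl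
        exact hS _ (SStep.bv (WeakBv.beta hv))
      | appL w => exact hP' _ (SStep.bv w)
      | appR w => exact hS _ (SStep.bv (WeakBv.appR w))
    | oplus o =>
      cases o with
      | appL o' => exact hP' _ (SStep.oplus o')
      | appR o' => exact hS _ (SStep.oplus (OplusRed.appR o'))
  | @appR P Q Q' hcond hQ ih =>
    intro hS m hs
    have hQ' : SurfNormal Q' := ih (surf_app_right hS)
    cases hs with
    | bv w =>
      cases w with
      | beta hv =>
        exact hS _ (SStep.bv (WeakBv.beta
          (value_ctor (unb_ctor hQ (surf_noweak (surf_app_right hS))) hv)))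
      | appL w => exact hS _ (SStep.bv (WeakBv.appL w))
      | appR w => exact hQ' _ (SStep.bv w)
    | oplus o =>
      cases o with
      | appL o' => exact hS _ (SStep.oplus (OplusRed.appL o'))
      | appR o' => exact hQ' _ (SStep.oplus o')
  | @oplusL P P' Q hcond hP ih =>
    intro hS; exact ((surf_nooplus hS) _ _ (OplusRed.root P Q)).elim
  | @oplusR P Q Q' hcond hQ ih =>
    intro hS; exact ((surf_nooplus hS) _ _ (OplusRed.root P Q)).elim

/-! ### Unbiased diamond -/

lemma unb_diamond {M A} (h1 : UnbBv M A) :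
    ∀ B, UnbBv M B → A = B ∨ ∃ C, UnbBv A C ∧ UnbBv B C := by
  induction h1 with
  | @weak M A w =>
    intro B h2
    cases h2 with
    | weak w2 =>
      rcases weak_diamond w _ w2 with rfl | ⟨C, hC1, hC2⟩
      · exact Or.inl rfl
      · exact Or.inr ⟨C, UnbBv.weak hC1, UnbBv.weak hC2⟩
    | lam hc _ => exact (hc _ w).elim
    | appL hc _ => exact (hc _ w).elim
    | appR hc _ => exact (hc _ w).elim
    | oplusL hc _ => exact (hc _ w).elim
    | oplusR hc _ => exact (hc _ w).elim
  | @lam P P' hc hP ih =>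
    intro B h2
    cases h2 with
    | weak w2 => exact (hc _ w2).elim
    | lam hc2 hP2 =>
      rcases ih _ hP2 with rfl | ⟨C, hC1, hC2⟩
      · exact Or.inl rfl
      · exact Or.inr ⟨_, UnbBv.lam (fun _ h => nomatch h) hC1,
          UnbBv.lam (fun _ h => nomatch h) hC2⟩
  | @appL P P' Q hc hP ih =>
    intro B h2
    cases h2 with
    | weak w2 => exact (hc _ w2).elim
    | appL hc2 hP2 =>
      rcases ih _ hP2 with rfl | ⟨C, hC1, hC2⟩
      · exact Or.inl rfl
      · exact Or.inr ⟨_,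
          UnbBv.appL (unb_noweak (UnbBv.appL hc hP) hc) hC1,
          UnbBv.appL (unb_noweak (UnbBv.appL hc2 hP2) hc) hC2⟩
    | @appR _ _ Q' hc2 hQ2 =>
      exact Or.inr ⟨PTm.app P' Q',
        UnbBv.appR (unb_noweak (UnbBv.appL hc hP) hc) hQ2,
        UnbBv.appL (unb_noweak (UnbBv.appR hc2 hQ2) hc) hP⟩
  | @appR P Q Q' hc hQ ih =>
    intro B h2
    cases h2 with
    | weak w2 => exact (hc _ w2).elim
    | @appL _ P' _ hc2 hP2 =>
      exact Or.inr ⟨PTm.app P' Q',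
        UnbBv.appL (unb_noweak (UnbBv.appR hc hQ) hc) hP2,
        UnbBv.appR (unb_noweak (UnbBv.appL hc2 hP2) hc) hQ⟩
    | appR hc2 hQ2 =>
      rcases ih _ hQ2 with rfl | ⟨C, hC1, hC2⟩
      · exact Or.inl rfl
      · exact Or.inr ⟨_,
          UnbBv.appR (unb_noweak (UnbBv.appR hc hQ) hc) hC1,
          UnbBv.appR (unb_noweak (UnbBv.appR hc2 hQ2) hc) hC2⟩
  | @oplusL P P' Q hc hP ih =>
    intro B h2
    cases h2 with
    | weak w2 => exact (hc _ w2).elim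
    | oplusL hc2 hP2 =>
      rcases ih _ hP2 with rfl | ⟨C, hC1, hC2⟩
      · exact Or.inl rfl
      · exact Or.inr ⟨_, UnbBv.oplusL (fun _ h => nomatch h) hC1,
          UnbBv.oplusL (fun _ h => nomatch h) hC2⟩
    | @oplusR _ _ Q' hc2 hQ2 =>
      exact Or.inr ⟨PTm.oplus P' Q',
        UnbBv.oplusR (fun _ h => nomatch h) hQ2,
        UnbBv.oplusL (fun _ h => nomatch h) hP⟩
  | @oplusR P Q Q' hc hQ ih =>
    intro B h2
    cases h2 with
    | weak w2 => exact (hc _ w2).elim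
    | @oplusL _ P' _ hc2 hP2 =>
      exact Or.inr ⟨PTm.oplus P' Q',
        UnbBv.oplusL (fun _ h => nomatch h) hP2,
        UnbBv.oplusR (fun _ h => nomatch h) hQ⟩
    | oplusR hc2 hQ2 =>
      rcases ih _ hQ2 with rfl | ⟨C, hC1, hC2⟩
      · exact Or.inl rfl
      · exact Or.inr ⟨_, UnbBv.oplusR (fun _ h => nomatch h) hC1,
          UnbBv.oplusR (fun _ h => nomatch h) hC2⟩

/-! ### Totality -/

lemma full_to_unb {M M'} (h : FullBv M M') : ∃ N, UnbBv M N := by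
  induction h with
  | beta hv => exact ⟨_, UnbBv.weak (WeakBv.beta hv)⟩
  | lam _ ih =>
    obtain ⟨N, hN⟩ := ih
    exact ⟨_, UnbBv.lam (fun _ h => nomatch h) hN⟩
  | @appL P P' Q _ ih =>
    obtain ⟨N, hN⟩ := ih
    by_cases hw : ∀ s, ¬ WeakBv (PTm.app P Q) s
    · exact ⟨_, UnbBv.appL hw hN⟩
    · push_neg at hw
      obtain ⟨s, hs⟩ := hw
      exact ⟨s, UnbBv.weak hs⟩
  | @appR P Q Q' _ ih =>
    obtain ⟨N, hN⟩ := ih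
    by_cases hw : ∀ s, ¬ WeakBv (PTm.app P Q) s
    · exact ⟨_, UnbBv.appR hw hN⟩
    · push_neg at hw
      obtain ⟨s, hs⟩ := hw
      exact ⟨s, UnbBv.weak hs⟩
  | oplusL _ ih =>
    obtain ⟨N, hN⟩ := ih
    exact ⟨_, UnbBv.oplusL (fun _ h => nomatch h) hN⟩
  | oplusR _ ih =>
    obtain ⟨N, hN⟩ := ih
    exact ⟨_, UnbBv.oplusR (fun _ h => nomatch h) hN⟩

lemma estep_total {M} (h : ¬ TmNormal M) : ∃ d, EStep M d := by
  by_cases hs : SurfNormal M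
  · have : ∃ d, Step M d := by
      by_contra hc; push_neg at hc; exact h hc
    obtain ⟨d, hd⟩ := this
    cases hd with
    | bv f =>
      obtain ⟨N, hN⟩ := full_to_unb f
      exact ⟨_, EStep.unb hs hN⟩
    | oplus o => exact ((surf_nooplus hs) _ _ o).elim
  · have : ∃ d, SStep M d := by
      by_contra hc; push_neg at hc; exact hs hc
    obtain ⟨d, hd⟩ := this
    exact ⟨d, EStep.surf hs hd⟩

end Aux2
section Aux3

/-! ### Scale and FullLift machinery -/

lemma scale_one (d : MDist) : scale 1 d = d := by
  simp [scale]

lemma scale_add (p : NNReal) (a b : MDist) :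
    scale p (a + b) = scale p a + scale p b := by
  simp [scale]

lemma scale_scale (p q : NNReal) (d : MDist) :
    scale p (scale q d) = scale (p * q) d := by
  simp [scale, Multiset.map_map, Function.comp, mul_assoc]

lemma scale_cons (p q : NNReal) (M : PTm) (d : MDist) :
    scale p ((q, M) ::ₘ d) = (p * q, M) ::ₘ scale p d := by
  simp [scale]

lemma full_add {r} {a b c d : MDist} (h1 : FullLift r a b) (h2 : FullLift r c d) :
    FullLift r (a + c) (b + d) := by
  induction h1 with
  | zero => simpa using h2
  | @keep p M m n hn _ ih =>
    have := FullLift.keep (p := p) (M := M) hn ih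
    simpa [Multiset.cons_add] using this
  | @step p M e m n hr _ ih =>
    have := FullLift.step (p := p) hr ih
    simpa [Multiset.cons_add, add_assoc] using this

lemma full_scale {r} {a b : MDist} (p : NNReal) (h : FullLift r a b) :
    FullLift r (scale p a) (scale p b) := by
  induction h with
  | zero => simpa [scale] using FullLift.zero (r := r)
  | @keep q M m n hn _ ih =>
    rw [scale_cons, scale_cons]
    exact FullLift.keep hn ih
  | @step q M e m n hr _ ih =>
    rw [scale_cons, scale_add, scale_scale]
    exact FullLift.step hr ih

lemma full_total (m : MDist) : ∃ n, FullLift EStep m n := by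
  induction m using Multiset.induction with
  | empty => exact ⟨0, FullLift.zero⟩
  | @cons a s ih =>
    obtain ⟨n, hn⟩ := ih
    obtain ⟨p, M⟩ := a
    by_cases hM : TmNormal M
    · exact ⟨_, FullLift.keep hM hn⟩
    · obtain ⟨d, hd⟩ := estep_total hM
      exact ⟨_, FullLift.step hd hn⟩

lemma lift_single {M d} (h : EStep M d) : FullLift EStep (single M) d := by
  have := FullLift.step (p := 1) h (FullLift.zero (r := EStep))
  simpa [single, scale_one] using this

lemma full_zero' {r} {m n : MDist} (h : FullLift r m n) : m = 0 → n = 0 := by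
  induction h with
  | zero => intro _; rfl
  | keep _ _ _ => intro hm; exact absurd hm (by simp)
  | step _ _ _ => intro hm; exact absurd hm (by simp)

lemma full_zero {r} {n : MDist} (h : FullLift r 0 n) : n = 0 := full_zero' h rfl

lemma cons_add_comm {α} (a : α) (s t : Multiset α) :
    a ::ₘ (s + t) = s + (a ::ₘ t) := by
  rw [← Multiset.singleton_add, ← Multiset.singleton_add, add_left_comm]

lemma full_inv {r : PTm → MDist → Prop} {m n : MDist} (h : FullLift r m n) :
    ∀ p (M : PTm) m', m = (p, M) ::ₘ m' →
      (TmNormal M ∧ ∃ n', n = (p, M) ::ₘ n' ∧ FullLift r m' n') ∨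
      (∃ d n', r M d ∧ n = scale p d + n' ∧ FullLift r m' n') := by
  induction h with
  | zero => intro p M m' hm; exact absurd hm.symm (by simp)
  | @keep q N mm nn hN hsub ih =>
    intro p M m' hm
    rcases (Multiset.cons_eq_cons.mp hm) with ⟨hab, hst⟩ | ⟨hne, cs, hs, ht⟩
    · obtain ⟨rfl, rfl⟩ := Prod.mk.inj hab
      subst hst
      exact Or.inl ⟨hN, nn, rfl, hsub⟩
    · subst ht
      rcases ih p M cs hs with ⟨hM, n', rfl, hf⟩ | ⟨d, n', hr, rfl, hf⟩
      · exact Or.inl ⟨hM, (q, N) ::ₘ n', Multiset.cons_swap _ _ _,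
          FullLift.keep hN hf⟩
      · exact Or.inr ⟨d, (q, N) ::ₘ n', hr, cons_add_comm _ _ _,
          FullLift.keep hN hf⟩
  | @step q N dd mm nn hr hsub ih =>
    intro p M m' hm
    rcases (Multiset.cons_eq_cons.mp hm) with ⟨hab, hst⟩ | ⟨hne, cs, hs, ht⟩
    · obtain ⟨rfl, rfl⟩ := Prod.mk.inj hab
      subst hst
      exact Or.inr ⟨dd, nn, hr, rfl, hsub⟩
    · subst ht
      rcases ih p M cs hs with ⟨hM, n', rfl, hf⟩ | ⟨d, n', hr', rfl, hf⟩
      · exact Or.inl ⟨hM, scale q dd + n', (cons_add_comm _ _ _).symm,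
          FullLift.step hr hf⟩
      · exact Or.inr ⟨d, scale q dd + n', hr', add_left_comm _ _ _,
          FullLift.step hr hf⟩

/-! ### obsN lemmas -/

lemma obsN_add (a b : MDist) (N : PTm) : obsN (a + b) N = obsN a N + obsN b N := by
  unfold obsN
  split <;> simp

lemma obsN_nonnormal {d : MDist} (h : ∀ q ∈ d, ¬ TmNormal q.2) (N : PTm) :
    obsN d N = 0 := by
  unfold obsN
  split
  · rename_i hN
    have : Multiset.filter (fun q => q.2 = N) d = 0 := by
      rw [Multiset.filter_eq_nil]
      intro q hq hqN
      exact h q hq (hqN ▸ hN)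
    simp [this]
  · rfl

lemma obsN_scale (p : NNReal) (d : MDist) (N : PTm) :
    obsN (scale p d) N = p * obsN d N := by
  unfold obsN
  split
  · rw [scale, Multiset.filter_map, Multiset.map_map]
    have : (Multiset.filter ((fun q : NNReal × PTm => q.2 = N) ∘
        fun q : NNReal × PTm => (p * q.1, q.2)) d) =
        Multiset.filter (fun q => q.2 = N) d := by
      apply Multiset.filter_congr
      intro q _; rfl
    rw [this]
    simp only [Function.comp]
    rw [← Multiset.sum_map_mul_left]
  · simp

end Aux3
section Aux4

lemma ms_swap {α} (a b c d : α) :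
    ({a, b} : Multiset α) + {c, d} = {a, c} + {b, d} := by
  simp only [Multiset.insert_eq_cons, Multiset.cons_add, Multiset.singleton_add]
  rw [Multiset.cons_swap b c]

lemma mem_pair {α} {q a b : α} (h : q ∈ ({a, b} : Multiset α)) : q = a ∨ q = b := by
  simpa using h

lemma ediamond_core {M d₁ d₂} (h1 : EStep M d₁) (h2 : EStep M d₂) :
    d₁ = d₂ ∨ ((∃ e, FullLift EStep d₁ e ∧ FullLift EStep d₂ e) ∧
      (∀ q ∈ d₁, ¬ TmNormal q.2) ∧ (∀ q ∈ d₂, ¬ TmNormal q.2)) := by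
  cases h1 with
  | surf hns1 s1 =>
    cases h2 with
    | unb hs _ => exact (hns1 hs).elim
    | surf hns2 s2 =>
      cases s1 with
      | @bv A w1 =>
        cases s2 with
        | @bv B w2 =>
          rcases weak_diamond w1 _ w2 with rfl | ⟨C, hC1, hC2⟩
          · exact Or.inl rfl
          · refine Or.inr ⟨⟨single C,
              lift_single (EStep.surf (fun h => h _ (SStep.bv hC1)) (SStep.bv hC1)),
              lift_single (EStep.surf (fun h => h _ (SStep.bv hC2)) (SStep.bv hC2))⟩,
              ?_, ?_⟩
            · intro q hq
              rw [single, Multiset.mem_singleton] at hq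
              subst hq; exact nn_weak hC1
            · intro q hq
              rw [single, Multiset.mem_singleton] at hq
              subst hq; exact nn_weak hC2
        | @oplus M₁ M₂ o2 =>
          obtain ⟨M₁', M₂', w₁', w₂', o'⟩ := weak_oplus w1 o2
          refine Or.inr ⟨⟨{((1 : NNReal)/2, M₁'), ((1 : NNReal)/2, M₂')},
            lift_single (EStep.surf (fun h => h _ (SStep.oplus o')) (SStep.oplus o')),
            ?_⟩, ?_, ?_⟩
          · have F := FullLift.step (p := (1 : NNReal)/2)
              (EStep.surf (fun h => h _ (SStep.bv w₁')) (SStep.bv w₁'))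
              (FullLift.step (p := (1 : NNReal)/2)
                (EStep.surf (fun h => h _ (SStep.bv w₂')) (SStep.bv w₂'))
                (FullLift.zero (r := EStep)))
            simpa [single, scale] using F
          · intro q hq
            rw [single, Multiset.mem_singleton] at hq
            subst hq; exact nn_oplus o'
          · intro q hq
            rcases mem_pair hq with rfl | rfl
            · exact nn_weak w₁'
            · exact nn_weak w₂'
      | @oplus M₁ M₂ o1 =>
        cases s2 with
        | @bv B w2 =>
          obtain ⟨M₁', M₂', w₁', w₂', o'⟩ := weak_oplus w2 o1
          refine Or.inr ⟨⟨{((1 : NNReal)/2, M₁'), ((1 : NNReal)/2, M₂')},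
            ?_,
            lift_single (EStep.surf (fun h => h _ (SStep.oplus o')) (SStep.oplus o'))⟩,
            ?_, ?_⟩
          · have F := FullLift.step (p := (1 : NNReal)/2)
              (EStep.surf (fun h => h _ (SStep.bv w₁')) (SStep.bv w₁'))
              (FullLift.step (p := (1 : NNReal)/2)
                (EStep.surf (fun h => h _ (SStep.bv w₂')) (SStep.bv w₂'))
                (FullLift.zero (r := EStep)))
            simpa [single, scale] using F
          · intro q hq
            rcases mem_pair hq with rfl | rfl
            · exact nn_weak w₁'
            · exact nn_weak w₂'
          · intro q hq
            rw [single, Multiset.mem_singleton] at hq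
            subst hq; exact nn_oplus o'
        | @oplus C D o2 =>
          rcases oplus_diamond o1 _ _ o2 with ⟨rfl, rfl⟩ | ⟨A₁, A₂, B₁, B₂, hA, hB, hC, hD⟩
          · exact Or.inl rfl
          · set h2 : NNReal := (1 : NNReal)/2 with hh
            refine Or.inr ⟨⟨scale h2 {(h2, A₁), (h2, A₂)} + (scale h2 {(h2, B₁), (h2, B₂)} + 0),
              FullLift.step (EStep.surf (fun h => h _ (SStep.oplus hA)) (SStep.oplus hA))
                (FullLift.step (EStep.surf (fun h => h _ (SStep.oplus hB)) (SStep.oplus hB))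
                  (FullLift.zero (r := EStep))),
              ?_⟩, ?_, ?_⟩
            · have F := FullLift.step (p := h2)
                (EStep.surf (fun h => h _ (SStep.oplus hC)) (SStep.oplus hC))
                (FullLift.step (p := h2)
                  (EStep.surf (fun h => h _ (SStep.oplus hD)) (SStep.oplus hD))
                  (FullLift.zero (r := EStep)))
              have heq : scale h2 {(h2, A₁), (h2, B₁)} + (scale h2 {(h2, A₂), (h2, B₂)} + 0)
                  = scale h2 {(h2, A₁), (h2, A₂)} + (scale h2 {(h2, B₁), (h2, B₂)} + 0) := by
                simp only [scale, Multiset.map_cons, Multiset.map_singleton,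
                  Multiset.insert_eq_cons, add_zero]
                exact ms_swap _ _ _ _
              rwa [heq] at F
            · intro q hq
              rcases mem_pair hq with rfl | rfl
              · exact nn_oplus hA
              · exact nn_oplus hB
            · intro q hq
              rcases mem_pair hq with rfl | rfl
              · exact nn_oplus hC
              · exact nn_oplus hD
  | unb hs1 u1 =>
    cases h2 with
    | surf hns _ => exact (hns hs1).elim
    | unb _ u2 =>
      rcases unb_diamond u1 _ u2 with rfl | ⟨C, hC1, hC2⟩
      · exact Or.inl rfl
      · refine Or.inr ⟨⟨single C,
          lift_single (EStep.unb (unb_surf u1 hs1) hC1),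
          lift_single (EStep.unb (unb_surf u2 hs1) hC2)⟩, ?_, ?_⟩
        · intro q hq
          rw [single, Multiset.mem_singleton] at hq
          subst hq; exact nn_unb hC1
        · intro q hq
          rw [single, Multiset.mem_singleton] at hq
          subst hq; exact nn_unb hC2

lemma ediamond {M d₁ d₂} (h1 : EStep M d₁) (h2 : EStep M d₂) :
    (∃ e, FullLift EStep d₁ e ∧ FullLift EStep d₂ e) ∧
      ∀ N, obsN d₁ N = obsN d₂ N := by
  rcases ediamond_core h1 h2 with rfl | ⟨hj, hn1, hn2⟩
  · obtain ⟨e, he⟩ := full_total d₁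
    exact ⟨⟨e, he, he⟩, fun N => rfl⟩
  · exact ⟨hj, fun N => by rw [obsN_nonnormal hn1, obsN_nonnormal hn2]⟩

end Aux4
section Aux5

lemma obsN_cons (x : NNReal × PTm) (a : MDist) (N : PTm) :
    obsN (x ::ₘ a) N = obsN {x} N + obsN a N := by
  rw [← Multiset.singleton_add, obsN_add]

lemma full_diamond {m m₁ : MDist} (h1 : FullLift EStep m m₁) :
    ∀ m₂, FullLift EStep m m₂ →
      (∃ n, FullLift EStep m₁ n ∧ FullLift EStep m₂ n) ∧
        ∀ N, obsN m₁ N = obsN m₂ N := by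
  induction h1 with
  | zero =>
    intro m₂ h2
    rw [full_zero h2]
    exact ⟨⟨0, FullLift.zero, FullLift.zero⟩, fun N => rfl⟩
  | @keep p M m' n₁ hnorm hsub ih =>
    intro m₂ h2
    rcases full_inv h2 p M m' rfl with ⟨_, n₂, rfl, h₂'⟩ | ⟨d, n₂, hE, rfl, h₂'⟩
    · obtain ⟨⟨k, hk1, hk2⟩, hobs⟩ := ih _ h₂'
      refine ⟨⟨(p, M) ::ₘ k, FullLift.keep hnorm hk1, FullLift.keep hnorm hk2⟩,
        fun N => ?_⟩
      rw [obsN_cons, obsN_cons, hobs N]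
    · exact absurd hnorm (estep_not_normal hE)
  | @step p M d₁ m' n₁ hE hsub ih =>
    intro m₂ h2
    rcases full_inv h2 p M m' rfl with ⟨hn, _, _, _⟩ | ⟨d₂, n₂, hE₂, rfl, h₂'⟩
    · exact absurd hn (estep_not_normal hE)
    · obtain ⟨⟨e, he1, he2⟩, hod⟩ := ediamond hE hE₂
      obtain ⟨⟨k, hk1, hk2⟩, ho⟩ := ih _ h₂'
      refine ⟨⟨scale p e + k, full_add (full_scale p he1) hk1,
        full_add (full_scale p he2) hk2⟩, fun N => ?_⟩
      rw [obsN_add, obsN_add, obsN_scale, obsN_scale, hod N, ho N]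

end Aux5

/-- **obsN-diamond for full unbiased evaluation** in the probabilistic Call-by-Value
λ-calculus: (a) if `m ⇉E m₁` and `m ⇉E m₂` then `m₁ = m₂` or they can be joined in one
`⇉E`-step; (b) moreover `obsN(m₁) = obsN(m₂)`. -/
theorem prob_cbv_full_obsN_diamond (m m₁ m₂ : MDist) (hm : IsMDist m)
    (h₁ : FullLift EStep m m₁) (h₂ : FullLift EStep m m₂) :
    (m₁ = m₂ ∨ ∃ n : MDist, FullLift EStep m₁ n ∧ FullLift EStep m₂ n) ∧
      obsN m₁ = obsN m₂ := by
  obtain ⟨hj, ho⟩ := full_diamond h₁ _ h₂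
  exact ⟨Or.inr hj, funext fun N => ho N⟩
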